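/- arXiv:1710.09554 — 3 statements merged into one kernel-verified Lean document; each statement's English description precedes it below -/
import Mathlib

section
/- Bias of the SVRG composition gradient estimator (Lemma 1, core estimate): Suppose Assumption 2 holds. Then for all x, x̃ ∈ ℝ^N and every integer A ≥ 1, E_{σ,i}[ ‖(∂Ĝ(σ,x,x̃))^T ∇F_i(Ĝ(σ,x,x̃)) − (∂Ĝ(σ,x,x̃))^T ∇F_i(G(x))‖² ] ≤ 9·B_G⁴ L_F² · (1/A) · ‖x − x̃‖². (Here the factor 9 comes from the deterministic bound ‖∂Ĝ(σ,x,x̃)‖_F ≤ 3B_G and the estimate E_σ‖Ĝ(σ,x,x̃) − G(x)‖² ≤ (B_G²/A)‖x − x̃‖².) -/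
noncomputable section

open Finset
open scoped RealInnerProductSpace

abbrev Euc (N : ℕ) := EuclideanSpace ℝ (Fin N)

/-- Frobenius norm of a linear map between Euclidean spaces: the square root of the
sum of the squared norms of the columns. -/
def frobNorm {N M : ℕ} (T : Euc N →L[ℝ] Euc M) : ℝ :=
  Real.sqrt (∑ j : Fin N, ‖T (EuclideanSpace.single j 1)‖ ^ 2)

/-- The averaged inner function `G = (1/m) ∑ⱼ Gⱼ`. -/
def Gbar {m N M : ℕ} (G : Fin m → Euc N → Euc M) (x : Euc N) : Euc M :=
  (m : ℝ)⁻¹ • ∑ j, G j x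

/-- The averaged Jacobian `∂G = (1/m) ∑ⱼ ∂Gⱼ`. -/
def Jbar {m N M : ℕ} (J : Fin m → Euc N → (Euc N →L[ℝ] Euc M)) (x : Euc N) :
    Euc N →L[ℝ] Euc M :=
  (m : ℝ)⁻¹ • ∑ j, J j x

/-- `Tᵀ v`: the transpose (adjoint) of `T` applied to `v`. -/
def transApp {N M : ℕ} (T : Euc N →L[ℝ] Euc M) (v : Euc M) : Euc N :=
  ContinuousLinearMap.adjoint T v

/-- Assumption 2 of the paper: bounded gradients, Lipschitz gradients, bounded
Jacobians (Frobenius norm), Lipschitz inner functions and Lipschitz Jacobians. -/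
def Assumption2 {n m N M : ℕ} (G : Fin m → Euc N → Euc M)
    (J : Fin m → Euc N → (Euc N →L[ℝ] Euc M))
    (gradF : Fin n → Euc M → Euc M) (BF LF BG LG : ℝ) : Prop :=
  (∀ i y, ‖gradF i y‖ ≤ BF) ∧
  (∀ i y y', ‖gradF i y - gradF i y'‖ ≤ LF * ‖y - y'‖) ∧
  (∀ j x, frobNorm (J j x) ≤ BG) ∧
  (∀ j x x', ‖G j x - G j x'‖ ≤ BG * ‖x - x'‖) ∧
  (∀ j x x', frobNorm (J j x - J j x') ≤ LG * ‖x - x'‖)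

/-- Continuous differentiability of the data, with the prescribed Jacobians and
gradients. -/
def SmoothData {n m N M : ℕ} (Fi : Fin n → Euc M → ℝ) (G : Fin m → Euc N → Euc M)
    (J : Fin m → Euc N → (Euc N →L[ℝ] Euc M)) (gradF : Fin n → Euc M → Euc M) : Prop :=
  (∀ j x, HasFDerivAt (G j) (J j x) x) ∧ (∀ j, Continuous (J j)) ∧
  (∀ i y, HasGradientAt (Fi i) (gradF i y) y) ∧ (∀ i, Continuous (gradF i))

/-- Uniform average over all tuples `σ ∈ {1,…,m}^A`. -/
def Esig {m A : ℕ} (f : (Fin A → Fin m) → ℝ) : ℝ :=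
  (∑ σ : Fin A → Fin m, f σ) / (m ^ A : ℝ)

/-- The SVRG estimator `Ĝ(σ,x,x̃)` of the inner function. -/
def GhatSVRG {m N M : ℕ} (G : Fin m → Euc N → Euc M) {A : ℕ}
    (σ : Fin A → Fin m) (x xt : Euc N) : Euc M :=
  (A : ℝ)⁻¹ • ∑ l, (G (σ l) x - G (σ l) xt) + Gbar G xt

/-- The SVRG estimator `∂Ĝ(σ,x,x̃)` of the Jacobian. -/
def JhatSVRG {m N M : ℕ} (J : Fin m → Euc N → (Euc N →L[ℝ] Euc M)) {A : ℕ}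
    (σ : Fin A → Fin m) (x xt : Euc N) : Euc N →L[ℝ] Euc M :=
  (A : ℝ)⁻¹ • ∑ l, (J (σ l) x - J (σ l) xt) + Jbar J xt

/-!
The adjoint of `∂Ĝ(σ,x,x̃)` has operator norm at most `3 B_G`, because the Frobenius norm
dominates the operator norm, and `∇F_i` is `L_F`-Lipschitz; so the integrand is at most
`9 B_G² L_F² ‖Ĝ(σ,x,x̃) - G(x)‖²`. The deviation `Ĝ(σ,x,x̃) - G(x)` is the mean of `A`
independent uniform draws of the centred increments
`Z_j = (G_j(x) - G_j(x̃)) - (G(x) - G(x̃))`, so its second moment is `1/A` times their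
variance, which is at most the second moment `B_G² ‖x - x̃‖²` of the uncentred increments.
-/

lemma opNorm_le_frobNorm {N M : ℕ} (T : Euc N →L[ℝ] Euc M) : ‖T‖ ≤ frobNorm T := by
  refine T.opNorm_le_bound (Real.sqrt_nonneg _) fun v => ?_
  have hv : T v = ∑ j, v j • T (EuclideanSpace.single j 1) := by
    conv_lhs => rw [← (EuclideanSpace.basisFun (Fin N) ℝ).sum_repr v]
    simp [map_sum, map_smul]
  calc ‖T v‖ ≤ ∑ j, ‖v j‖ * ‖T (EuclideanSpace.single j 1)‖ := by
        rw [hv]; exact norm_sum_le_of_le _ fun j _ => (norm_smul _ _).le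
    _ ≤ √(∑ j, ‖v j‖ ^ 2) * frobNorm T := Real.sum_mul_le_sqrt_mul_sqrt _ _ _
    _ = frobNorm T * ‖v‖ := by rw [EuclideanSpace.norm_eq, mul_comm]

lemma norm_transApp_sub_le {N M : ℕ} (T : Euc N →L[ℝ] Euc M) (u v : Euc M) :
    ‖transApp T u - transApp T v‖ ≤ ‖T‖ * ‖u - v‖ := by
  rw [transApp, transApp, ← map_sub, ← ContinuousLinearMap.adjoint.norm_map T]
  exact (ContinuousLinearMap.adjoint T).le_opNorm _

lemma inv_mul_sum_le_of_le {k : ℕ} {c : ℝ} (hc : 0 ≤ c) {f : Fin k → ℝ}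
    (hf : ∀ i, f i ≤ c) : (k : ℝ)⁻¹ * ∑ i, f i ≤ c := by
  rcases k.eq_zero_or_pos with rfl | hk
  · simpa using hc
  · rw [inv_mul_le_iff₀ (by positivity)]
    simpa using sum_le_sum (s := univ) fun i _ => hf i

lemma norm_inv_smul_sum_le {E : Type*} [SeminormedAddCommGroup E] [NormedSpace ℝ E] {k : ℕ}
    {B : ℝ} (hB : 0 ≤ B) {f : Fin k → E} (hf : ∀ i, ‖f i‖ ≤ B) :
    ‖(k : ℝ)⁻¹ • ∑ i, f i‖ ≤ B := by
  rw [norm_smul, norm_inv, Real.norm_natCast]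
  exact (mul_le_mul_of_nonneg_left (norm_sum_le _ _) (by positivity)).trans
    (inv_mul_sum_le_of_le hB hf)

section Esig

variable {m A : ℕ}

lemma Esig_mono {f g : (Fin A → Fin m) → ℝ} (h : ∀ σ, f σ ≤ g σ) : Esig f ≤ Esig g := by
  unfold Esig
  gcongr with σ
  exact h σ

lemma Esig_const_mul (c : ℝ) (f : (Fin A → Fin m) → ℝ) :
    Esig (fun σ => c * f σ) = c * Esig f := by
  simp only [Esig, ← mul_sum, mul_div_assoc]

end Esig

section Sampling

variable {E : Type*} [NormedAddCommGroup E] [InnerProductSpace ℝ E] {m : ℕ}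

-- Multiplied by `m` so that no `m ^ (A - 1)` appears.
lemma mul_sum_pi_norm_sum_sq {Z : Fin m → E} (hZ : ∑ j, Z j = 0) (A : ℕ) :
    (m : ℝ) * ∑ σ : Fin A → Fin m, ‖∑ l, Z (σ l)‖ ^ 2 = A * m ^ A * ∑ j, ‖Z j‖ ^ 2 := by
  induction A with
  | zero => simp
  | succ A ih =>
    have hsplit : ∑ σ : Fin (A + 1) → Fin m, ‖∑ l, Z (σ l)‖ ^ 2
        = ∑ j, ∑ τ : Fin A → Fin m,
            (‖Z j‖ ^ 2 + 2 * ⟪Z j, ∑ l, Z (τ l)⟫ + ‖∑ l, Z (τ l)‖ ^ 2) := by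
      rw [← (Fin.consEquiv fun _ => Fin m).sum_comp, Fintype.sum_prod_type]
      simp [Fin.consEquiv, Fin.sum_univ_succ, norm_add_sq_real]
    have hcross : ∑ j, ∑ τ : Fin A → Fin m, 2 * ⟪Z j, ∑ l, Z (τ l)⟫ = 0 := by
      simp_rw [← mul_sum, ← inner_sum, ← sum_inner, hZ, inner_zero_left, mul_zero]
    rw [hsplit]
    simp only [sum_add_distrib, hcross, sum_const, card_univ, Fintype.card_fun,
      Fintype.card_fin, nsmul_eq_mul]
    rw [← mul_sum]
    push_cast
    linear_combination (m : ℝ) * ih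

lemma Esig_norm_sum_sq {Z : Fin m → E} (hZ : ∑ j, Z j = 0) (A : ℕ) :
    Esig (fun σ : Fin A → Fin m => ‖∑ l, Z (σ l)‖ ^ 2)
      = A * ((m : ℝ)⁻¹ * ∑ j, ‖Z j‖ ^ 2) := by
  rcases m.eq_zero_or_pos with rfl | hm
  · rcases A.eq_zero_or_pos with rfl | hA
    · simp [Esig]
    · simp [Esig, hA.ne']
  · rw [Esig, div_eq_iff (by positivity)]
    field_simp
    linear_combination mul_sum_pi_norm_sum_sq hZ A

lemma sum_sub_mean_eq_zero (W : Fin m → E) : ∑ j, (W j - (m : ℝ)⁻¹ • ∑ k, W k) = 0 := by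
  rcases m.eq_zero_or_pos with rfl | hm
  · simp
  · rw [sum_sub_distrib, sum_const, card_univ, Fintype.card_fin,
      ← Nat.cast_smul_eq_nsmul ℝ, smul_smul, mul_inv_cancel₀ (by positivity), one_smul, sub_self]

lemma sum_norm_sub_mean_sq_le (W : Fin m → E) :
    ∑ j, ‖W j - (m : ℝ)⁻¹ • ∑ k, W k‖ ^ 2 ≤ ∑ j, ‖W j‖ ^ 2 := by
  have hm : (m : ℝ) * ((m : ℝ)⁻¹) ^ 2 = (m : ℝ)⁻¹ := by
    rcases eq_or_ne (m : ℝ) 0 with h | h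
    · simp [h]
    · field_simp
  have hexpand : ∑ j, ‖W j - (m : ℝ)⁻¹ • ∑ k, W k‖ ^ 2
      = ∑ j, ‖W j‖ ^ 2 - (m : ℝ)⁻¹ * ‖∑ k, W k‖ ^ 2 := by
    simp_rw [norm_sub_sq_real]
    simp only [sum_add_distrib, sum_sub_distrib, ← mul_sum, ← sum_inner, real_inner_smul_right,
      real_inner_self_eq_norm_sq, norm_smul, mul_pow, norm_inv, Real.norm_natCast, sum_const,
      card_univ, Fintype.card_fin, nsmul_eq_mul]
    linear_combination ‖∑ k, W k‖ ^ 2 * hm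
  rw [hexpand]
  have : 0 ≤ (m : ℝ)⁻¹ * ‖∑ k, W k‖ ^ 2 := by positivity
  linarith

end Sampling

lemma Gbar_sub_Gbar {m N M : ℕ} (G : Fin m → Euc N → Euc M) (x xt : Euc N) :
    Gbar G x - Gbar G xt = (m : ℝ)⁻¹ • ∑ j, (G j x - G j xt) := by
  rw [Gbar, Gbar, ← smul_sub, sum_sub_distrib]

lemma GhatSVRG_sub_Gbar {m N M A : ℕ} (hA : A ≠ 0) (G : Fin m → Euc N → Euc M)
    (σ : Fin A → Fin m) (x xt : Euc N) :
    GhatSVRG G σ x xt - Gbar G x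
      = (A : ℝ)⁻¹ • ∑ l, (G (σ l) x - G (σ l) xt - (Gbar G x - Gbar G xt)) := by
  rw [sum_sub_distrib, sum_const, card_univ, Fintype.card_fin, smul_sub,
    ← Nat.cast_smul_eq_nsmul ℝ, smul_smul, inv_mul_cancel₀ (by exact_mod_cast hA), one_smul,
    GhatSVRG]
  abel

lemma Esig_norm_GhatSVRG_sub_Gbar_sq_le {m N M A : ℕ} (hA : 0 < A) {B : ℝ}
    {G : Fin m → Euc N → Euc M} (hG : ∀ j x x', ‖G j x - G j x'‖ ≤ B * ‖x - x'‖)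
    (x xt : Euc N) :
    Esig (fun σ : Fin A → Fin m => ‖GhatSVRG G σ x xt - Gbar G x‖ ^ 2)
      ≤ B ^ 2 * ‖x - xt‖ ^ 2 / A := by
  set W : Fin m → Euc M := fun j => G j x - G j xt
  set Z : Fin m → Euc M := fun j => W j - (m : ℝ)⁻¹ • ∑ k, W k
  have hdev (σ : Fin A → Fin m) :
      ‖GhatSVRG G σ x xt - Gbar G x‖ ^ 2 = ((A : ℝ)⁻¹) ^ 2 * ‖∑ l, Z (σ l)‖ ^ 2 := by
    rw [GhatSVRG_sub_Gbar hA.ne', Gbar_sub_Gbar, norm_smul, mul_pow, norm_inv,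
      Real.norm_natCast]
  have hW : (m : ℝ)⁻¹ * ∑ j, ‖W j‖ ^ 2 ≤ B ^ 2 * ‖x - xt‖ ^ 2 :=
    inv_mul_sum_le_of_le (by positivity) fun j => by
      rw [← mul_pow]; exact pow_le_pow_left₀ (norm_nonneg _) (hG j x xt) 2
  calc Esig (fun σ : Fin A → Fin m => ‖GhatSVRG G σ x xt - Gbar G x‖ ^ 2)
      = ((A : ℝ)⁻¹) ^ 2 * Esig (fun σ : Fin A → Fin m => ‖∑ l, Z (σ l)‖ ^ 2) := by
        simp_rw [hdev, Esig_const_mul]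
    _ = (A : ℝ)⁻¹ * ((m : ℝ)⁻¹ * ∑ j, ‖Z j‖ ^ 2) := by
        rw [Esig_norm_sum_sq (sum_sub_mean_eq_zero W)]
        generalize ∑ j, ‖Z j‖ ^ 2 = s
        field_simp
    _ ≤ (A : ℝ)⁻¹ * ((m : ℝ)⁻¹ * ∑ j, ‖W j‖ ^ 2) := by
        gcongr (A : ℝ)⁻¹ * ((m : ℝ)⁻¹ * ?_)
        exact sum_norm_sub_mean_sq_le W
    _ ≤ B ^ 2 * ‖x - xt‖ ^ 2 / A := by
        rw [inv_mul_eq_div]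
        gcongr

lemma norm_JhatSVRG_le {m N M A : ℕ} {B : ℝ} (hB : 0 ≤ B)
    {J : Fin m → Euc N → (Euc N →L[ℝ] Euc M)} (hJ : ∀ j y, ‖J j y‖ ≤ B)
    (σ : Fin A → Fin m) (x xt : Euc N) :
    ‖JhatSVRG J σ x xt‖ ≤ 3 * B := by
  have hdiff : ‖(A : ℝ)⁻¹ • ∑ l, (J (σ l) x - J (σ l) xt)‖ ≤ 2 * B :=
    norm_inv_smul_sum_le (by positivity) fun l =>
      (norm_sub_le _ _).trans (by linarith [hJ (σ l) x, hJ (σ l) xt])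
  have hmean : ‖Jbar J xt‖ ≤ B := norm_inv_smul_sum_le hB fun j => hJ j xt
  calc ‖JhatSVRG J σ x xt‖
      ≤ ‖(A : ℝ)⁻¹ • ∑ l, (J (σ l) x - J (σ l) xt)‖ + ‖Jbar J xt‖ := norm_add_le _ _
    _ ≤ 3 * B := by linarith

lemma norm_transApp_JhatSVRG_sub_sq_le {m N M A : ℕ} {B L : ℝ} (hB : 0 ≤ B)
    {J : Fin m → Euc N → (Euc N →L[ℝ] Euc M)} (hJ : ∀ j y, ‖J j y‖ ≤ B)
    {g : Euc M → Euc M} (hg : ∀ y y', ‖g y - g y'‖ ≤ L * ‖y - y'‖)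
    (σ : Fin A → Fin m) (x xt : Euc N) (y y' : Euc M) :
    ‖transApp (JhatSVRG J σ x xt) (g y) - transApp (JhatSVRG J σ x xt) (g y')‖ ^ 2
      ≤ 9 * B ^ 2 * L ^ 2 * ‖y - y'‖ ^ 2 := by
  calc _ ≤ ‖JhatSVRG J σ x xt‖ ^ 2 * ‖g y - g y'‖ ^ 2 := by
        rw [← mul_pow]
        gcongr
        exact norm_transApp_sub_le _ _ _
    _ ≤ (3 * B) ^ 2 * (L * ‖y - y'‖) ^ 2 := by
        gcongr
        · exact norm_JhatSVRG_le hB hJ σ x xt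
        · exact hg y y'
    _ = 9 * B ^ 2 * L ^ 2 * ‖y - y'‖ ^ 2 := by ring

theorem svrg_gradient_bias_bound_general
    {n m N M A : ℕ} (hA : 0 < A)
    (BF LF BG LG : ℝ)
    (G : Fin m → Euc N → Euc M)
    (J : Fin m → Euc N → (Euc N →L[ℝ] Euc M)) (gradF : Fin n → Euc M → Euc M)
    (hA2 : Assumption2 G J gradF BF LF BG LG)
    (x xt : Euc N) :
    (n : ℝ)⁻¹ * ∑ i, Esig (fun σ : Fin A → Fin m =>
        ‖transApp (JhatSVRG J σ x xt) (gradF i (GhatSVRG G σ x xt)) -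
          transApp (JhatSVRG J σ x xt) (gradF i (Gbar G x))‖ ^ 2)
      ≤ 9 * BG ^ 4 * LF ^ 2 * (1 / (A : ℝ)) * ‖x - xt‖ ^ 2 := by
  obtain ⟨-, hgradF, hJ, hG, -⟩ := hA2
  have hJop (j : Fin m) (y : Euc N) : ‖J j y‖ ≤ BG := (opNorm_le_frobNorm _).trans (hJ j y)
  have hpt (i : Fin n) (σ : Fin A → Fin m) :=
    norm_transApp_JhatSVRG_sub_sq_le ((norm_nonneg _).trans (hJop (σ ⟨0, hA⟩) x)) hJop
      (hgradF i) σ x xt (GhatSVRG G σ x xt) (Gbar G x)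
  refine inv_mul_sum_le_of_le (by positivity) fun i => ?_
  calc _ ≤ Esig (fun σ : Fin A → Fin m =>
          9 * BG ^ 2 * LF ^ 2 * ‖GhatSVRG G σ x xt - Gbar G x‖ ^ 2) := Esig_mono (hpt i)
    _ ≤ 9 * BG ^ 2 * LF ^ 2 * (BG ^ 2 * ‖x - xt‖ ^ 2 / A) := by
        rw [Esig_const_mul]
        gcongr
        exact Esig_norm_GhatSVRG_sub_Gbar_sq_le hA hG x xt
    _ = 9 * BG ^ 4 * LF ^ 2 * (1 / (A : ℝ)) * ‖x - xt‖ ^ 2 := by ring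

/-- Lemma 1 (core estimate): bias of the SVRG composition gradient estimator. -/
theorem svrg_gradient_bias_bound
    {n m N M A : ℕ} (hn : 0 < n) (hm : 0 < m) (hA : 0 < A)
    (BF LF BG LG : ℝ) (hBF : 0 < BF) (hLF : 0 < LF) (hBG : 0 < BG) (hLG : 0 < LG)
    (Fi : Fin n → Euc M → ℝ) (G : Fin m → Euc N → Euc M)
    (J : Fin m → Euc N → (Euc N →L[ℝ] Euc M)) (gradF : Fin n → Euc M → Euc M)
    (hsm : SmoothData Fi G J gradF)
    (hA2 : Assumption2 G J gradF BF LF BG LG)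
    (x xt : Euc N) :
    (n : ℝ)⁻¹ * ∑ i, Esig (fun σ : Fin A → Fin m =>
        ‖transApp (JhatSVRG J σ x xt) (gradF i (GhatSVRG G σ x xt)) -
          transApp (JhatSVRG J σ x xt) (gradF i (Gbar G x))‖ ^ 2)
      ≤ 9 * BG ^ 4 * LF ^ 2 * (1 / (A : ℝ)) * ‖x - xt‖ ^ 2 :=
  svrg_gradient_bias_bound_general hA BF LF BG LG G J gradF hA2 x xt
end
end

section
/- Deviation of the SVRG estimated gradient from the true partial gradient: Suppose Assumption 2 holds. Then for all x, x̃ ∈ ℝ^N and every integer A ≥ 1, E_{σ,i}[ ‖(∂Ĝ(σ,x,x̃))^T ∇F_i(Ĝ(σ,x,x̃)) − (∂G(x))^T ∇F_i(G(x))‖² ] ≤ 2(B_F² L_G² + B_G⁴ L_F²) · (1/A) · ‖x − x̃‖². -/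
/-!
Write `Ĝ - G(x) = A⁻¹ ∑ₗ (d(σₗ) - d̄)` with `dₖ = Gₖ(x) - Gₖ(x̃)`. The summands are
independent and centred, so the cross terms vanish on average and
`E‖Ĝ - G(x)‖² = A⁻¹ · (1/m) ∑ₖ ‖dₖ - d̄‖² ≤ A⁻¹ B_G² ‖x - x̃‖²`; the same holds for `∂Ĝ`,
column by column in Frobenius norm, with `L_G`. Pointwise,
`(∂Ĝ)ᵀ∇Fᵢ(Ĝ) - (∂G)ᵀ∇Fᵢ(G) = (∂Ĝ - ∂G)ᵀ∇Fᵢ(Ĝ) + (∂G)ᵀ(∇Fᵢ(Ĝ) - ∇Fᵢ(G))`,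
and `‖Tᵀv‖ ≤ ‖T‖_F ‖v‖` with `(a + b)² ≤ 2a² + 2b²` bounds its square by
`2 B_F² ‖∂Ĝ - ∂G‖_F² + 2 B_G² L_F² ‖Ĝ - G(x)‖²`.
-/

noncomputable section

open Finset
open scoped RealInnerProductSpace

section Averages

variable {E F : Type*} [AddCommGroup E] [Module ℝ E] [AddCommGroup F] [Module ℝ F] {m A : ℕ}

/- `Gbar G x`, `Jbar J x`, `GhatSVRG G σ x xt` and `JhatSVRG J σ x xt` unfold to `avg` and
`svrgEst` of the families `G · x`, `G · xt` (resp. `J · x`, `J · xt`). -/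
def avg (v : Fin m → E) : E :=
  (m : ℝ)⁻¹ • ∑ j, v j

def svrgEst (u w : Fin m → E) (σ : Fin A → Fin m) : E :=
  (A : ℝ)⁻¹ • ∑ l, (u (σ l) - w (σ l)) + avg w

lemma map_avg (f : E →ₗ[ℝ] F) (v : Fin m → E) : f (avg v) = avg (fun k => f (v k)) := by
  simp only [avg, map_smul, map_sum]

lemma map_svrgEst (f : E →ₗ[ℝ] F) (u w : Fin m → E) (σ : Fin A → Fin m) :
    f (svrgEst u w σ) = svrgEst (fun k => f (u k)) (fun k => f (w k)) σ := by
  simp only [svrgEst, map_add, map_smul, map_sum, map_sub, map_avg]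

lemma svrgEst_sub_avg (hA : A ≠ 0) (u w : Fin m → E) (σ : Fin A → Fin m) :
    svrgEst u w σ - avg u = (A : ℝ)⁻¹ • ∑ l, ((u - w) (σ l) - avg (u - w)) := by
  have hA' : (A : ℝ) ≠ 0 := Nat.cast_ne_zero.2 hA
  simp only [svrgEst, avg, Pi.sub_apply, sum_sub_distrib, sum_const, card_univ,
    Fintype.card_fin, ← Nat.cast_smul_eq_nsmul ℝ, smul_sub, smul_smul,
    inv_mul_cancel_left₀ hA']
  abel

lemma sum_sub_avg_eq_zero (hm : m ≠ 0) (v : Fin m → E) : ∑ k, (v k - avg v) = 0 := by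
  have hm' : (m : ℝ) ≠ 0 := Nat.cast_ne_zero.2 hm
  simp only [avg, sum_sub_distrib, sum_const, card_univ, Fintype.card_fin,
    ← Nat.cast_smul_eq_nsmul ℝ, smul_smul, mul_inv_cancel₀ hm', one_smul, sub_self]

end Averages

section Sampling

variable {m A : ℕ}

lemma Esig_add_mul (a b : ℝ) (f g : (Fin A → Fin m) → ℝ) :
    Esig (fun σ => a * f σ + b * g σ) = a * Esig f + b * Esig g := by
  simp only [Esig, sum_add_distrib, ← mul_sum, add_div, mul_div_assoc]

variable {E : Type*} [NormedAddCommGroup E] [InnerProductSpace ℝ E]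

/- Multiplied by `m`, to avoid `m ^ (A - 1)`. -/
lemma mul_sum_norm_sq_sum_comp_of_sum_eq_zero {W : Fin m → E} (hW : ∑ k, W k = 0)
    (A : ℕ) :
    (m : ℝ) * ∑ σ : Fin A → Fin m, ‖∑ l, W (σ l)‖ ^ 2 = A * m ^ A * ∑ k, ‖W k‖ ^ 2 := by
  induction A with
  | zero => simp
  | succ A ih =>
    have hcross : ∑ a, ∑ τ : Fin A → Fin m, ⟪W a, ∑ l, W (τ l)⟫ = 0 := by
      simp only [← inner_sum, ← sum_inner, hW, inner_zero_left]
    rw [← (Fin.consEquiv fun _ => Fin m).sum_comp, Fintype.sum_prod_type]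
    simp only [Fin.consEquiv_apply, Fin.sum_univ_succ, Fin.cons_zero, Fin.cons_succ,
      norm_add_sq_real, sum_add_distrib, sum_const, card_univ, Fintype.card_fin,
      Fintype.card_pi, prod_const, nsmul_eq_mul, ← mul_sum]
    push_cast
    linear_combination (m : ℝ) * ih + 2 * (m : ℝ) * hcross

lemma Esig_norm_sq_smul_sum_comp_of_sum_eq_zero (hm : m ≠ 0) {W : Fin m → E}
    (hW : ∑ k, W k = 0) :
    Esig (fun σ : Fin A → Fin m => ‖(A : ℝ)⁻¹ • ∑ l, W (σ l)‖ ^ 2)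
      = (A : ℝ)⁻¹ * ((m : ℝ)⁻¹ * ∑ k, ‖W k‖ ^ 2) := by
  have hsum := mul_sum_norm_sq_sum_comp_of_sum_eq_zero hW A
  have hm' : (m : ℝ) ≠ 0 := Nat.cast_ne_zero.2 hm
  rcases eq_or_ne A 0 with rfl | hA
  · simp [Esig]
  have hA' : (A : ℝ) ≠ 0 := Nat.cast_ne_zero.2 hA
  simp only [Esig, norm_smul, mul_pow, norm_inv, Real.norm_natCast, ← mul_sum]
  field_simp
  linear_combination hsum

lemma sum_norm_sq_sub_avg (v : Fin m → E) :
    ∑ k, ‖v k - avg v‖ ^ 2 = ∑ k, ‖v k‖ ^ 2 - (m : ℝ)⁻¹ * ‖∑ k, v k‖ ^ 2 := by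
  simp only [norm_sub_sq_real, sum_add_distrib, sum_sub_distrib, ← mul_sum, ← sum_inner,
    sum_const, card_univ, Fintype.card_fin, nsmul_eq_mul, avg, real_inner_smul_right,
    real_inner_self_eq_norm_sq, norm_smul, mul_pow, norm_inv, Real.norm_natCast]
  rcases eq_or_ne (m : ℝ) 0 with hm | hm
  · simp [hm]
  · field_simp
    ring

lemma Esig_norm_sq_svrgEst_sub_avg_le (hm : m ≠ 0) (hA : A ≠ 0) {u w : Fin m → E} {C : ℝ}
    (hC : ∀ k, ‖u k - w k‖ ^ 2 ≤ C) :
    Esig (fun σ : Fin A → Fin m => ‖svrgEst u w σ - avg u‖ ^ 2) ≤ (A : ℝ)⁻¹ * C := by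
  have hm' : (m : ℝ) ≠ 0 := Nat.cast_ne_zero.2 hm
  calc Esig (fun σ : Fin A → Fin m => ‖svrgEst u w σ - avg u‖ ^ 2)
      = (A : ℝ)⁻¹ * ((m : ℝ)⁻¹ * ∑ k, ‖(u - w) k - avg (u - w)‖ ^ 2) := by
        have hvar := Esig_norm_sq_smul_sum_comp_of_sum_eq_zero (A := A) hm
          (sum_sub_avg_eq_zero hm (u - w))
        simp only [svrgEst_sub_avg hA]
        exact hvar
    _ ≤ (A : ℝ)⁻¹ * ((m : ℝ)⁻¹ * ∑ _k : Fin m, C) := by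
        rw [sum_norm_sq_sub_avg]
        gcongr
        exact (sub_le_self _ (by positivity)).trans (sum_le_sum fun k _ => hC k)
    _ = (A : ℝ)⁻¹ * C := by
        rw [sum_const, card_univ, Fintype.card_fin, nsmul_eq_mul, inv_mul_cancel_left₀ hm']

end Sampling

lemma norm_avg_le {E : Type*} [SeminormedAddCommGroup E] [NormedSpace ℝ E] {m : ℕ}
    (hm : m ≠ 0) {v : Fin m → E} {B : ℝ} (hB : ∀ k, ‖v k‖ ≤ B) : ‖avg v‖ ≤ B := by
  have hm' : (0 : ℝ) < m := Nat.cast_pos.2 (Nat.pos_of_ne_zero hm)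
  calc ‖avg v‖ ≤ (m : ℝ)⁻¹ * ∑ k, ‖v k‖ := by
        rw [avg, norm_smul, norm_inv, Real.norm_natCast]
        gcongr
        exact norm_sum_le _ _
    _ ≤ (m : ℝ)⁻¹ * ∑ _k : Fin m, B := by gcongr with k; exact hB k
    _ = B := by
        rw [sum_const, card_univ, Fintype.card_fin, nsmul_eq_mul,
          inv_mul_cancel_left₀ hm'.ne']

section Frobenius

variable {N M : ℕ}

/- `frobNorm T = ‖frobCols T‖`: this carries estimates in inner product spaces over to
Jacobians in Frobenius norm. -/
def frobCols : (Euc N →L[ℝ] Euc M) →ₗ[ℝ] PiLp 2 (fun _ : Fin N => Euc M) where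
  toFun T := WithLp.toLp 2 fun j => T (EuclideanSpace.single j 1)
  map_add' _ _ := rfl
  map_smul' _ _ := rfl

lemma norm_frobCols (T : Euc N →L[ℝ] Euc M) : ‖frobCols T‖ = frobNorm T := by
  rw [PiLp.norm_eq_of_L2]
  rfl

lemma frobNorm_nonneg (T : Euc N →L[ℝ] Euc M) : 0 ≤ frobNorm T :=
  Real.sqrt_nonneg _

lemma norm_transApp_le (T : Euc N →L[ℝ] Euc M) (v : Euc M) :
    ‖transApp T v‖ ≤ frobNorm T * ‖v‖ := by
  have hcoord : ∀ j, transApp T v j = ⟪T (EuclideanSpace.single j 1), v⟫ := fun j => by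
    rw [transApp, ← ContinuousLinearMap.adjoint_inner_right, EuclideanSpace.inner_single_left]
    simp
  refine le_of_pow_le_pow_left₀ two_ne_zero
    (mul_nonneg (frobNorm_nonneg T) (norm_nonneg v)) ?_
  rw [mul_pow, ← norm_frobCols, PiLp.norm_sq_eq_of_L2 _ (frobCols T),
    EuclideanSpace.norm_sq_eq (transApp T v), sum_mul]
  refine sum_le_sum fun j _ => ?_
  rw [hcoord, Real.norm_eq_abs, ← mul_pow]
  exact pow_le_pow_left₀ (abs_nonneg _)
    (abs_real_inner_le_norm (T (EuclideanSpace.single j 1)) v) 2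

lemma norm_sq_transApp_sub_transApp_le (S T : Euc N →L[ℝ] Euc M) (u v : Euc M) :
    ‖transApp S u - transApp T v‖ ^ 2
      ≤ 2 * ((frobNorm (S - T) * ‖u‖) ^ 2 + (frobNorm T * ‖u - v‖) ^ 2) := by
  have hsplit : transApp S u - transApp T v = transApp (S - T) u + transApp T (u - v) := by
    simp only [transApp, map_sub, sub_apply]
    abel
  calc ‖transApp S u - transApp T v‖ ^ 2
      ≤ (‖transApp (S - T) u‖ + ‖transApp T (u - v)‖) ^ 2 := by
        rw [hsplit]
        gcongr
        exact norm_add_le _ _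
    _ ≤ 2 * (‖transApp (S - T) u‖ ^ 2 + ‖transApp T (u - v)‖ ^ 2) := add_sq_le
    _ ≤ 2 * ((frobNorm (S - T) * ‖u‖) ^ 2 + (frobNorm T * ‖u - v‖) ^ 2) := by
        gcongr <;> exact norm_transApp_le _ _

lemma norm_sq_transApp_sub_transApp_le_of_le {S T : Euc N →L[ℝ] Euc M} {u v : Euc M}
    {B K L d : ℝ} (hu : ‖u‖ ≤ B) (huv : ‖u - v‖ ≤ L * d) (hT : frobNorm T ≤ K) :
    ‖transApp S u - transApp T v‖ ^ 2
      ≤ 2 * B ^ 2 * frobNorm (S - T) ^ 2 + 2 * (K * L) ^ 2 * d ^ 2 := by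
  have hK : 0 ≤ K := (frobNorm_nonneg T).trans hT
  have h₁ : (frobNorm (S - T) * ‖u‖) ^ 2 ≤ (frobNorm (S - T) * B) ^ 2 :=
    pow_le_pow_left₀ (by positivity [frobNorm_nonneg (S - T)])
      (mul_le_mul_of_nonneg_left hu (frobNorm_nonneg _)) 2
  have h₂ : (frobNorm T * ‖u - v‖) ^ 2 ≤ (K * (L * d)) ^ 2 :=
    pow_le_pow_left₀ (mul_nonneg (frobNorm_nonneg T) (norm_nonneg _))
      (mul_le_mul hT huv (norm_nonneg _) hK) 2
  linear_combination norm_sq_transApp_sub_transApp_le S T u v + 2 * h₁ + 2 * h₂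

variable {m A : ℕ}

lemma frobNorm_avg_le (hm : m ≠ 0) {U : Fin m → (Euc N →L[ℝ] Euc M)} {B : ℝ}
    (hB : ∀ k, frobNorm (U k) ≤ B) : frobNorm (avg U) ≤ B := by
  rw [← norm_frobCols, map_avg]
  exact norm_avg_le hm fun k => (norm_frobCols (U k)).trans_le (hB k)

lemma Esig_frobNorm_sq_svrgEst_sub_avg_le (hm : m ≠ 0) (hA : A ≠ 0)
    {U W : Fin m → (Euc N →L[ℝ] Euc M)} {C : ℝ} (hC : ∀ k, frobNorm (U k - W k) ^ 2 ≤ C) :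
    Esig (fun σ : Fin A → Fin m => frobNorm (svrgEst U W σ - avg U) ^ 2)
      ≤ (A : ℝ)⁻¹ * C := by
  simp only [← norm_frobCols, map_sub, map_svrgEst, map_avg]
  exact Esig_norm_sq_svrgEst_sub_avg_le hm hA fun k => by
    simpa only [← map_sub, norm_frobCols] using hC k

end Frobenius

theorem svrg_gradient_deviation_bound_general
    {n m N M A : ℕ} (hn : 0 < n) (hm : 0 < m) (hA : 0 < A)
    (BF LF BG LG : ℝ)
    (G : Fin m → Euc N → Euc M)
    (J : Fin m → Euc N → (Euc N →L[ℝ] Euc M)) (gradF : Fin n → Euc M → Euc M)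
    (hA2 : Assumption2 G J gradF BF LF BG LG)
    (x xt : Euc N) :
    (n : ℝ)⁻¹ * ∑ i, Esig (fun σ : Fin A → Fin m =>
        ‖transApp (JhatSVRG J σ x xt) (gradF i (GhatSVRG G σ x xt)) -
          transApp (Jbar J x) (gradF i (Gbar G x))‖ ^ 2)
      ≤ 2 * (BF ^ 2 * LG ^ 2 + BG ^ 4 * LF ^ 2) * (1 / (A : ℝ)) * ‖x - xt‖ ^ 2 := by
  obtain ⟨hgradF_le, hgradF_lip, hJ_le, hG_lip, hJ_lip⟩ := hA2
  have hJbar : frobNorm (Jbar J x) ≤ BG :=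
    frobNorm_avg_le (U := fun k => J k x) hm.ne' fun k => hJ_le k x
  have hG_var : Esig (fun σ : Fin A → Fin m => ‖GhatSVRG G σ x xt - Gbar G x‖ ^ 2)
      ≤ (A : ℝ)⁻¹ * (BG * ‖x - xt‖) ^ 2 :=
    Esig_norm_sq_svrgEst_sub_avg_le (u := fun k => G k x) (w := fun k => G k xt)
      hm.ne' hA.ne' fun k => pow_le_pow_left₀ (norm_nonneg _) (hG_lip k x xt) 2
  have hJ_var : Esig (fun σ : Fin A → Fin m => frobNorm (JhatSVRG J σ x xt - Jbar J x) ^ 2)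
      ≤ (A : ℝ)⁻¹ * (LG * ‖x - xt‖) ^ 2 :=
    Esig_frobNorm_sq_svrgEst_sub_avg_le (U := fun k => J k x) (W := fun k => J k xt)
      hm.ne' hA.ne' fun k => pow_le_pow_left₀ (frobNorm_nonneg _) (hJ_lip k x xt) 2
  set R := 2 * (BF ^ 2 * LG ^ 2 + BG ^ 4 * LF ^ 2) * (1 / (A : ℝ)) * ‖x - xt‖ ^ 2 with hR
  rw [inv_mul_le_iff₀ (Nat.cast_pos.2 hn)]
  refine (sum_le_card_nsmul univ _ R fun i _ => ?_).trans_eq (by simp)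
  calc _ ≤ Esig (fun σ : Fin A → Fin m =>
          2 * BF ^ 2 * frobNorm (JhatSVRG J σ x xt - Jbar J x) ^ 2
            + 2 * (BG * LF) ^ 2 * ‖GhatSVRG G σ x xt - Gbar G x‖ ^ 2) :=
        Esig_mono fun σ => norm_sq_transApp_sub_transApp_le_of_le (hgradF_le i _)
          (hgradF_lip i _ _) hJbar
    _ ≤ 2 * BF ^ 2 * ((A : ℝ)⁻¹ * (LG * ‖x - xt‖) ^ 2)
          + 2 * (BG * LF) ^ 2 * ((A : ℝ)⁻¹ * (BG * ‖x - xt‖) ^ 2) := by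
        rw [Esig_add_mul]
        gcongr
    _ = R := by
        rw [hR]
        ring

/-- Deviation of the SVRG estimated gradient from the true partial gradient. -/
theorem svrg_gradient_deviation_bound
    {n m N M A : ℕ} (hn : 0 < n) (hm : 0 < m) (hA : 0 < A)
    (BF LF BG LG : ℝ) (hBF : 0 < BF) (hLF : 0 < LF) (hBG : 0 < BG) (hLG : 0 < LG)
    (Fi : Fin n → Euc M → ℝ) (G : Fin m → Euc N → Euc M)
    (J : Fin m → Euc N → (Euc N →L[ℝ] Euc M)) (gradF : Fin n → Euc M → Euc M)
    (hsm : SmoothData Fi G J gradF)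
    (hA2 : Assumption2 G J gradF BF LF BG LG)
    (x xt : Euc N) :
    (n : ℝ)⁻¹ * ∑ i, Esig (fun σ : Fin A → Fin m =>
        ‖transApp (JhatSVRG J σ x xt) (gradF i (GhatSVRG G σ x xt)) -
          transApp (Jbar J x) (gradF i (Gbar G x))‖ ^ 2)
      ≤ 2 * (BF ^ 2 * LG ^ 2 + BG ^ 4 * LF ^ 2) * (1 / (A : ℝ)) * ‖x - xt‖ ^ 2 :=
  svrg_gradient_deviation_bound_general hn hm hA BF LF BG LG G J gradF hA2 x xt
end
end

section
/- Bound on the average squared gradient deviation via the objective gap (appendix Lemma 4): Suppose Assumption 3 holds with constant L_f > 0, let λ > 0, R(x) := (λ/2)‖x‖², P(x) := F(G(x)) + R(x), and let x* ∈ ℝ^N satisfy ∇P(x*) = 0 (equivalently (∂G(x*))^T∇F(G(x*)) + λx* = 0). Then for every x ∈ ℝ^N, (1/n)∑_{i=1}^n ‖(∂G(x))^T∇F_i(G(x)) − (∂G(x*))^T∇F_i(G(x*))‖² ≤ 2L_f·( P(x) − P(x*) − (λ/2)‖x − x*‖² ). -/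
noncomputable section

open Finset
open scoped RealInnerProductSpace

section Bregman

variable {E ι : Type*} [NormedAddCommGroup E] [InnerProductSpace ℝ E] [Fintype ι]

/-- `f'` stands for the gradient of `f` at `y`. -/
def bregman (f : E → ℝ) (f' : E) (x y : E) : ℝ :=
  f x - f y - ⟪f', x - y⟫

theorem bregman_zero (f : E → ℝ) (x y : E) : bregman f 0 x y = f x - f y := by
  simp [bregman]

theorem bregman_add (f h : E → ℝ) (a b x y : E) :
    bregman (fun z => f z + h z) (a + b) x y = bregman f a x y + bregman h b x y := by
  simp only [bregman, inner_add_left]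
  ring

theorem bregman_smul_sum (c : ℝ) (f : ι → E → ℝ) (f' : ι → E) (x y : E) :
    bregman (fun z => c * ∑ i, f i z) (c • ∑ i, f' i) x y = c * ∑ i, bregman (f i) (f' i) x y := by
  simp only [bregman, real_inner_smul_left, sum_inner, sum_sub_distrib]
  ring

theorem bregman_half_sq_norm (lam : ℝ) (x y : E) :
    bregman (fun z => lam / 2 * ‖z‖ ^ 2) (lam • y) x y = lam / 2 * ‖x - y‖ ^ 2 := by
  simp only [bregman, real_inner_smul_left, inner_sub_right, real_inner_self_eq_norm_sq,
    norm_sub_sq_real, real_inner_comm x y]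
  ring

/-- At a critical point `y` of `P z = c * ∑ i, f i z + lam / 2 * ‖z‖ ^ 2`, the gap
`P x - P y` is the Bregman divergence of `P`, which splits into the averaged Bregman
divergences of the `f i` plus that of the regulariser. -/
theorem regularized_gap_sub_eq_smul_sum_bregman {c lam : ℝ} {f : ι → E → ℝ} {g : ι → E → E}
    {y : E} (hcrit : c • ∑ i, g i y + lam • y = 0) (x : E) :
    (c * ∑ i, f i x + lam / 2 * ‖x‖ ^ 2) - (c * ∑ i, f i y + lam / 2 * ‖y‖ ^ 2) -
        lam / 2 * ‖x - y‖ ^ 2 =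
      c * ∑ i, bregman (f i) (g i y) x y := by
  have hgap := bregman_zero (fun z => c * ∑ i, f i z + lam / 2 * ‖z‖ ^ 2) x y
  rw [← hcrit, bregman_add, bregman_smul_sum, bregman_half_sq_norm] at hgap
  linarith

theorem avg_sq_norm_sub_le_regularized_gap {L c lam : ℝ} (hL : 0 < L) (hc : 0 ≤ c)
    {f : ι → E → ℝ} {g : ι → E → E}
    (hcoco : ∀ i x y, ‖g i x - g i y‖ ^ 2 / (2 * L) ≤ bregman (f i) (g i y) x y)
    {y : E} (hcrit : c • ∑ i, g i y + lam • y = 0) (x : E) :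
    c * ∑ i, ‖g i x - g i y‖ ^ 2 ≤
      2 * L * ((c * ∑ i, f i x + lam / 2 * ‖x‖ ^ 2) - (c * ∑ i, f i y + lam / 2 * ‖y‖ ^ 2) -
        lam / 2 * ‖x - y‖ ^ 2) := by
  rw [regularized_gap_sub_eq_smul_sum_bregman hcrit, mul_sum, mul_sum, mul_sum]
  refine sum_le_sum fun i _ => ?_
  have h := mul_le_mul_of_nonneg_left (hcoco i x y) hc
  rw [mul_div_assoc', div_le_iff₀ (by positivity)] at h
  linarith

end Bregman

theorem avg_squared_gradient_deviation_via_gap_general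
    {n m N M : ℕ}
    (Lf lam : ℝ) (hLf : 0 < Lf)
    (Fi : Fin n → Euc M → ℝ) (G : Fin m → Euc N → Euc M)
    (J : Fin m → Euc N → (Euc N →L[ℝ] Euc M)) (gradF : Fin n → Euc M → Euc M)
    (hA3 : ∀ (i : Fin n) (x y : Euc N),
      ‖transApp (Jbar J x) (gradF i (Gbar G x)) -
        transApp (Jbar J y) (gradF i (Gbar G y))‖ ^ 2 / (2 * Lf)
        ≤ Fi i (Gbar G x) - Fi i (Gbar G y) -
            ⟪transApp (Jbar J y) (gradF i (Gbar G y)), x - y⟫)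
    (xstar : Euc N)
    (hcrit : ((n : ℝ)⁻¹ • ∑ i, transApp (Jbar J xstar) (gradF i (Gbar G xstar)))
        + lam • xstar = 0)
    (x : Euc N) :
    (n : ℝ)⁻¹ * ∑ i,
        ‖transApp (Jbar J x) (gradF i (Gbar G x)) -
          transApp (Jbar J xstar) (gradF i (Gbar G xstar))‖ ^ 2
      ≤ 2 * Lf *
          (((n : ℝ)⁻¹ * ∑ i, Fi i (Gbar G x) + lam / 2 * ‖x‖ ^ 2) -
            ((n : ℝ)⁻¹ * ∑ i, Fi i (Gbar G xstar) + lam / 2 * ‖xstar‖ ^ 2) -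
            lam / 2 * ‖x - xstar‖ ^ 2) :=
  avg_sq_norm_sub_le_regularized_gap hLf (by positivity)
    (fun i x y => hA3 i x y) hcrit x

/-- Appendix Lemma 4: bound on the average squared gradient deviation via the
objective gap. -/
theorem avg_squared_gradient_deviation_via_gap
    {n m N M : ℕ} (hn : 0 < n) (hm : 0 < m)
    (Lf lam : ℝ) (hLf : 0 < Lf) (hlam : 0 < lam)
    (Fi : Fin n → Euc M → ℝ) (G : Fin m → Euc N → Euc M)
    (J : Fin m → Euc N → (Euc N →L[ℝ] Euc M)) (gradF : Fin n → Euc M → Euc M)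
    (hsm : SmoothData Fi G J gradF)
    (hA3 : ∀ (i : Fin n) (x y : Euc N),
      ‖transApp (Jbar J x) (gradF i (Gbar G x)) -
        transApp (Jbar J y) (gradF i (Gbar G y))‖ ^ 2 / (2 * Lf)
        ≤ Fi i (Gbar G x) - Fi i (Gbar G y) -
            ⟪transApp (Jbar J y) (gradF i (Gbar G y)), x - y⟫)
    (xstar : Euc N)
    (hcrit : ((n : ℝ)⁻¹ • ∑ i, transApp (Jbar J xstar) (gradF i (Gbar G xstar)))
        + lam • xstar = 0)
    (x : Euc N) :
    (n : ℝ)⁻¹ * ∑ i,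
        ‖transApp (Jbar J x) (gradF i (Gbar G x)) -
          transApp (Jbar J xstar) (gradF i (Gbar G xstar))‖ ^ 2
      ≤ 2 * Lf *
          (((n : ℝ)⁻¹ * ∑ i, Fi i (Gbar G x) + lam / 2 * ‖x‖ ^ 2) -
            ((n : ℝ)⁻¹ * ∑ i, Fi i (Gbar G xstar) + lam / 2 * ‖xstar‖ ^ 2) -
            lam / 2 * ‖x - xstar‖ ^ 2) :=
  avg_squared_gradient_deviation_via_gap_general Lf lam hLf Fi G J gradF hA3 xstar hcrit x
end
end
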